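/- For a finite simple graph G with m edges and minimum degree δ, HM₂(G) ≤ (1/2)M₁(G)² − δ(m−1)M₁(G) + (δ − 1/2)HM₁(G). -/
import Mathlib


open Finset BigOperators
open scoped Classical

variable {V : Type*} [Fintype V] [DecidableEq V]

/-- Edge degree: `d(e) = d(u) + d(v)` for `e = uv`. -/
def edeg (G : SimpleGraph V) [DecidableRel G.Adj] (e : Sym2 V) : ℕ :=
  Sym2.lift ⟨fun u v => G.degree u + G.degree v, fun u v => by simp [Nat.add_comm]⟩ e

/-- First hyper Zagreb index. -/
noncomputable def HM1 (G : SimpleGraph V) [DecidableRel G.Adj] : ℝ :=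
  ∑ e ∈ G.edgeFinset, (edeg G e : ℝ) ^ 2

/-- First Zagreb index. -/
noncomputable def M1 (G : SimpleGraph V) [DecidableRel G.Adj] : ℝ :=
  ∑ v, (G.degree v : ℝ) ^ 2

/-- Second hyper Zagreb index: sum of `d(e)d(f)` over unordered pairs of adjacent edges. -/
noncomputable def HM2 (G : SimpleGraph V) [DecidableRel G.Adj] : ℝ :=
  (1 / 2) * ∑ e ∈ G.edgeFinset, ∑ f ∈ G.edgeFinset,
    if e ≠ f ∧ ∃ v, v ∈ e ∧ v ∈ f then (edeg G e : ℝ) * edeg G f else 0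

lemma sum_edeg_eq (G : SimpleGraph V) [DecidableRel G.Adj] :
    ∑ e ∈ G.edgeFinset, (edeg G e : ℝ) = M1 G := by
  have h : ∀ e ∈ G.edgeFinset, (edeg G e : ℝ) = ∑ v, if v ∈ e then (G.degree v : ℝ) else 0 := by
    intro e he
    induction e using Sym2.ind with
    | _ u v =>
      rw [SimpleGraph.mem_edgeFinset, SimpleGraph.mem_edgeSet] at he
      have hne : u ≠ v := he.ne
      have : ∀ w : V, (if w ∈ s(u, v) then (G.degree w : ℝ) else 0)
          = (if w = u then (G.degree w : ℝ) else 0) + (if w = v then (G.degree w : ℝ) else 0) := by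
        intro w
        rcases eq_or_ne w u with rfl | h1 <;> rcases eq_or_ne w v with rfl | h2 <;>
          simp_all [Sym2.mem_iff]
      rw [Finset.sum_congr rfl fun w _ => this w, Finset.sum_add_distrib,
        Finset.sum_ite_eq' Finset.univ u, Finset.sum_ite_eq' Finset.univ v]
      simp [edeg]
  rw [Finset.sum_congr rfl h, Finset.sum_comm]
  unfold M1
  refine Finset.sum_congr rfl fun v _ => ?_
  rw [← Finset.sum_filter, Finset.sum_const, ← SimpleGraph.incidenceFinset_eq_filter,
    SimpleGraph.card_incidenceFinset_eq_degree]
  rw [nsmul_eq_mul, sq]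

lemma card_adjEdges (G : SimpleGraph V) [DecidableRel G.Adj] {e : Sym2 V}
    (he : e ∈ G.edgeFinset) :
    (G.edgeFinset.filter fun f => f ≠ e ∧ ∃ v, v ∈ e ∧ v ∈ f).card + 2 = edeg G e := by
  induction e using Sym2.ind with
  | _ u v =>
    rw [SimpleGraph.mem_edgeFinset, SimpleGraph.mem_edgeSet] at he
    have hne : u ≠ v := he.ne
    have hset : (G.edgeFinset.filter fun f => f ≠ s(u, v) ∧ ∃ w, w ∈ s(u, v) ∧ w ∈ f)
        = ((G.incidenceFinset u).erase s(u, v)) ∪ ((G.incidenceFinset v).erase s(u, v)) := by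
      ext f
      simp only [Finset.mem_filter, Finset.mem_union, Finset.mem_erase,
        SimpleGraph.incidenceFinset_eq_filter, Sym2.mem_iff]
      constructor
      · rintro ⟨hf, hne', w, (rfl | rfl), hw⟩
        · exact Or.inl ⟨hne', hf, hw⟩
        · exact Or.inr ⟨hne', hf, hw⟩
      · rintro (⟨hne', hf, hw⟩ | ⟨hne', hf, hw⟩)
        · exact ⟨hf, hne', u, Or.inl rfl, hw⟩
        · exact ⟨hf, hne', v, Or.inr rfl, hw⟩
    have hdisj : Disjoint ((G.incidenceFinset u).erase s(u, v))
        ((G.incidenceFinset v).erase s(u, v)) := by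
      rw [Finset.disjoint_left]
      intro f hfu hfv
      rw [Finset.mem_erase, SimpleGraph.incidenceFinset_eq_filter, Finset.mem_filter] at hfu hfv
      exact hfu.1 ((Sym2.mem_and_mem_iff hne).mp ⟨hfu.2.2, hfv.2.2⟩)
    have hmemu : s(u, v) ∈ G.incidenceFinset u := by
      rw [SimpleGraph.incidenceFinset_eq_filter, Finset.mem_filter]
      exact ⟨SimpleGraph.mem_edgeFinset.mpr he, Sym2.mem_mk_left u v⟩
    have hmemv : s(u, v) ∈ G.incidenceFinset v := by
      rw [SimpleGraph.incidenceFinset_eq_filter, Finset.mem_filter]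
      exact ⟨SimpleGraph.mem_edgeFinset.mpr he, Sym2.mem_mk_right u v⟩
    have hdu : 1 ≤ G.degree u := by
      rw [← SimpleGraph.card_incidenceFinset_eq_degree]
      exact Finset.card_pos.mpr ⟨_, hmemu⟩
    have hdv : 1 ≤ G.degree v := by
      rw [← SimpleGraph.card_incidenceFinset_eq_degree]
      exact Finset.card_pos.mpr ⟨_, hmemv⟩
    rw [hset, Finset.card_union_of_disjoint hdisj, Finset.card_erase_of_mem hmemu,
      Finset.card_erase_of_mem hmemv, SimpleGraph.card_incidenceFinset_eq_degree,
      SimpleGraph.card_incidenceFinset_eq_degree]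
    simp only [edeg, Sym2.lift_mk]
    omega

lemma two_minDegree_le_edeg (G : SimpleGraph V) [DecidableRel G.Adj] {f : Sym2 V}
    (hf : f ∈ G.edgeFinset) : 2 * G.minDegree ≤ edeg G f := by
  induction f using Sym2.ind with
  | _ u v =>
    rw [SimpleGraph.mem_edgeFinset, SimpleGraph.mem_edgeSet] at hf
    have h1 := G.minDegree_le_degree u
    have h2 := G.minDegree_le_degree v
    simp only [edeg, Sym2.lift_mk]
    omega

theorem stmt15 (G : SimpleGraph V) [DecidableRel G.Adj]
    (m : ℕ) (hm : m = G.edgeFinset.card) :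
    HM2 G ≤ (1 / 2) * M1 G ^ 2 - (G.minDegree : ℝ) * ((m : ℝ) - 1) * M1 G +
      ((G.minDegree : ℝ) - 1 / 2) * HM1 G := by
  set δ : ℝ := (G.minDegree : ℝ) with hδdef
  set M : ℝ := M1 G with hMdef
  have hδ0 : 0 ≤ δ := Nat.cast_nonneg _
  have hM0 : 0 ≤ M := Finset.sum_nonneg fun v _ => sq_nonneg _
  set E := G.edgeFinset with hE
  set A : Sym2 V → Finset (Sym2 V) :=
    fun e => E.filter fun f => f ≠ e ∧ ∃ v, v ∈ e ∧ v ∈ f with hA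
  -- inner sum rewrite
  have hinner : ∀ e ∈ E, (∑ f ∈ E,
      if e ≠ f ∧ ∃ v, v ∈ e ∧ v ∈ f then (edeg G e : ℝ) * edeg G f else 0)
      = (edeg G e : ℝ) * ∑ f ∈ A e, (edeg G f : ℝ) := by
    intro e _
    rw [Finset.mul_sum, hA]
    rw [Finset.sum_filter]
    refine Finset.sum_congr rfl fun f _ => ?_
    by_cases h : f ≠ e ∧ ∃ v, v ∈ e ∧ v ∈ f
    · rw [if_pos h, if_pos ⟨h.1.symm, h.2⟩]
    · rw [if_neg h, if_neg]
      intro ⟨h1, h2⟩; exact h ⟨h1.symm, h2⟩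
  -- per-edge bound
  have hedge : ∀ e ∈ E, (edeg G e : ℝ) * ∑ f ∈ A e, (edeg G f : ℝ)
      ≤ (M - 2*δ*((m:ℝ)-1) - 4*δ) * (edeg G e : ℝ) + (2*δ - 1) * (edeg G e : ℝ)^2 := by
    intro e he
    have hsubset : A e ⊆ E.erase e := by
      intro f hf
      rw [hA, Finset.mem_filter] at hf
      exact Finset.mem_erase.mpr ⟨hf.2.1, hf.1⟩
    have hcardE : (E.erase e).card + 1 = m := by
      rw [Finset.card_erase_of_mem he]
      have h1 : 1 ≤ E.card := Finset.card_pos.mpr ⟨e, he⟩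
      omega
    have hcardA : (A e).card + 2 = edeg G e := card_adjEdges G he
    have hsdiff : ((E.erase e) \ A e).card + edeg G e = m + 1 := by
      have h1 := Finset.card_sdiff_add_card_eq_card hsubset
      omega
    have hcast : (((E.erase e) \ A e).card : ℝ) = (m : ℝ) + 1 - (edeg G e : ℝ) := by
      have := congrArg (Nat.cast : ℕ → ℝ) hsdiff
      push_cast at this
      linarith
    have hSE : ∑ f ∈ E.erase e, (edeg G f : ℝ) = M - (edeg G e : ℝ) := by
      have h1 : (edeg G e : ℝ) + ∑ f ∈ E.erase e, (edeg G f : ℝ)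
          = ∑ f ∈ E, (edeg G f : ℝ) := Finset.add_sum_erase E (fun f => (edeg G f : ℝ)) he
      have h2 := sum_edeg_eq G
      rw [← hE] at h2
      rw [hMdef, ← h2]
      linarith
    have hlow : 2 * δ * (((E.erase e) \ A e).card : ℝ)
        ≤ ∑ f ∈ (E.erase e) \ A e, (edeg G f : ℝ) := by
      rw [mul_comm]
      have := Finset.card_nsmul_le_sum ((E.erase e) \ A e)
        (fun f => (edeg G f : ℝ)) (((2 * G.minDegree : ℕ) : ℝ)) ?_
      · rw [nsmul_eq_mul] at this
        rw [hδdef]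
        push_cast at this ⊢
        linarith
      · intro f hf
        have hfE : f ∈ E := (Finset.erase_subset _ _) (Finset.mem_sdiff.mp hf).1
        have h := two_minDegree_le_edeg G (f := f) hfE
        show ((2 * G.minDegree : ℕ) : ℝ) ≤ (edeg G f : ℝ)
        exact_mod_cast h
    have hsplit := Finset.sum_sdiff (f := fun f => (edeg G f : ℝ)) hsubset
    have hS : ∑ f ∈ A e, (edeg G f : ℝ)
        ≤ M - (edeg G e : ℝ) - 2 * δ * ((m : ℝ) + 1 - (edeg G e : ℝ)) := by
      rw [← hcast]
      linarith [hsplit, hSE, hlow]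
    calc (edeg G e : ℝ) * ∑ f ∈ A e, (edeg G f : ℝ)
        ≤ (edeg G e : ℝ) * (M - (edeg G e : ℝ) - 2 * δ * ((m : ℝ) + 1 - (edeg G e : ℝ))) :=
          mul_le_mul_of_nonneg_left hS (Nat.cast_nonneg _)
      _ = (M - 2*δ*((m:ℝ)-1) - 4*δ) * (edeg G e : ℝ) + (2*δ - 1) * (edeg G e : ℝ)^2 := by
          ring
  -- sum up
  have hbound : ∑ e ∈ E, (∑ f ∈ E,
      if e ≠ f ∧ ∃ v, v ∈ e ∧ v ∈ f then (edeg G e : ℝ) * edeg G f else 0)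
      ≤ (M - 2*δ*((m:ℝ)-1) - 4*δ) * M + (2*δ - 1) * HM1 G := by
    rw [Finset.sum_congr rfl hinner]
    calc ∑ e ∈ E, (edeg G e : ℝ) * ∑ f ∈ A e, (edeg G f : ℝ)
        ≤ ∑ e ∈ E, ((M - 2*δ*((m:ℝ)-1) - 4*δ) * (edeg G e : ℝ)
            + (2*δ - 1) * (edeg G e : ℝ)^2) := Finset.sum_le_sum hedge
      _ = (M - 2*δ*((m:ℝ)-1) - 4*δ) * M + (2*δ - 1) * HM1 G := by
          rw [Finset.sum_add_distrib, ← Finset.mul_sum, ← Finset.mul_sum]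
          rw [hE, sum_edeg_eq G, ← hMdef]
          rfl
  have hHM2 : HM2 G = (1/2) * ∑ e ∈ E, (∑ f ∈ E,
      if e ≠ f ∧ ∃ v, v ∈ e ∧ v ∈ f then (edeg G e : ℝ) * edeg G f else 0) := rfl
  have hδM : 0 ≤ δ * M := mul_nonneg hδ0 hM0
  have hkey : (1/2) * ((M - 2*δ*((m:ℝ)-1) - 4*δ) * M + (2*δ - 1) * HM1 G)
      = (1/2) * M^2 - δ * ((m:ℝ)-1) * M + (δ - 1/2) * HM1 G - 2 * (δ * M) := by ring
  rw [hHM2]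
  linarith
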